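/- arXiv:1811.06160 — 5 statements merged into one kernel-verified Lean document; each statement's English description precedes it below -/
import Mathlib

section
/- Let Υ_n be the graph whose vertices are the perfect matchings of the complete graph K_{2n}, with distinct matchings m, m' adjacent if and only if |m ∩ m'| = n − 2 (i.e., they differ by a single partner swap). Let a ∈ (0,1) and let X be a set of perfect matchings with |X| ≥ a·(2n−1)!!. Then for every h ∈ ℕ with h > h0 := √((n/2)·ln(1/a)), the set N_h(X) of perfect matchings at graph distance at most h from X in Υ_n satisfies |N_h(X)| ≥ (1 − exp(−2(h−h0)²/n))·(2n−1)!!. -/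
/-!
Let `f m` be the distance in `Υ_n` from `m` to `X`; it changes by at most one along edges.
Fixing a vertex `v`, the matchings split into `2n - 1` fibres of equal size according to the
partner of `v`, and the transposition of two partners maps one fibre onto another, moving
each matching along one edge, so the fibre means of `f` lie in an interval of length one.
Hoeffding's lemma for the fibre means, with induction on `n` inside the fibres, gives the
sub-Gaussian bound `E exp (x f) ≤ exp (x E f + n x² / 8)` for the uniform distribution.
Since `f` vanishes on `X`, the lower tail bound forces `E f ≤ h₀`, and the upper tail bound
then leaves at most `exp (-2 (h - h₀)² / n) (2n-1)!!` matchings at distance more than `h`.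
Finally, `Υ_n` is connected, so every matching within distance `h` is reachable.
-/

/-- `(2k-1)!! = 1 * 3 * 5 * ... * (2k-1)`, with `(-1)!! = 1`. -/
def oddFactorial : ℕ → ℕ
  | 0 => 1
  | k + 1 => (2 * k + 1) * oddFactorial k

/-- A perfect matching of the complete graph on vertex set `{0, ..., 2n-1}`. -/
def IsPM (n : ℕ) (m : Finset (Finset ℕ)) : Prop :=
  (∀ e ∈ m, e.card = 2 ∧ e ⊆ Finset.range (2 * n)) ∧
  ∀ v ∈ Finset.range (2 * n), ∃! e, e ∈ m ∧ v ∈ e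

/-- The perfect matching transposition graph `Υ_n`: two perfect matchings are
adjacent iff they differ by a single partner swap, i.e. share exactly `n - 2` edges. -/
def Upsilon (n : ℕ) : SimpleGraph (Finset (Finset ℕ)) where
  Adj m m' := m ≠ m' ∧ IsPM n m ∧ IsPM n m' ∧ (m ∩ m').card = n - 2
  symm := by
    constructor
    rintro m m' ⟨h1, h2, h3, h4⟩
    exact ⟨h1.symm, h3, h2, by rwa [Finset.inter_comm]⟩
  loopless := by
    constructor
    rintro m ⟨h, -⟩
    exact h rfl

open Finset Equiv Real MeasureTheory ProbabilityTheory
open scoped Pointwise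

theorem oddFactorial_pos (k : ℕ) : 0 < oddFactorial k := by
  induction k with
  | zero => exact Nat.one_pos
  | succ k ih => exact Nat.mul_pos (Nat.succ_pos _) ih

theorem sum_exp_mul_le_of_mem_Icc {ι : Type*} {I : Finset ι} (hI : I.Nonempty) {y : ι → ℝ}
    {a b : ℝ} (hy : ∀ i ∈ I, y i ∈ Set.Icc a b) (t : ℝ) :
    ∑ i ∈ I, exp (t * y i) ≤ #I * exp (t * ((∑ i ∈ I, y i) / #I) + (b - a) ^ 2 * t ^ 2 / 8) := by
  -- Hoeffding's lemma for the uniform distribution of the values `y i`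
  set μ : Measure ℝ := (#I : ENNReal)⁻¹ • ∑ i ∈ I, Measure.dirac (y i) with hμ
  have hN : (0 : ℝ) < #I := by simpa using hI.card_pos
  have integral_eq (g : ℝ → ℝ) : ∫ x, g x ∂μ = (∑ i ∈ I, g (y i)) / #I := by
    rw [hμ, integral_smul_measure, integral_finsetSum_measure]
    · simp [integral_dirac, div_eq_inv_mul]
    · exact fun _ _ ↦ integrable_dirac (by simp)
  have : IsProbabilityMeasure μ := by
    constructor
    simp only [hμ, Measure.smul_apply, Measure.coe_finsetSum, Finset.sum_apply, measure_univ,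
      sum_const, nsmul_eq_mul, mul_one, smul_eq_mul]
    exact ENNReal.inv_mul_cancel (by simpa using hI.ne_empty) (by simp)
  have hb : ∀ᵐ x ∂μ, x ∈ Set.Icc a b := by
    rw [ae_iff, hμ, Measure.smul_apply, Measure.coe_finsetSum, Finset.sum_apply]
    simpa using hy
  have hmgf := (hasSubgaussianMGF_of_mem_Icc measurable_id.aemeasurable hb).mgf_le t
  simp only [mgf, integral_eq, id] at hmgf
  rw [← div_le_iff₀' hN]
  calc (∑ i ∈ I, exp (t * y i)) / #I
      = (∑ i ∈ I, exp (t * (y i - (∑ i ∈ I, y i) / #I))) / #I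
          * exp (t * ((∑ i ∈ I, y i) / #I)) := by
        rw [div_mul_eq_mul_div, sum_mul]
        simp only [← exp_add]
        ring_nf
    _ ≤ _ := by
        rw [exp_add, mul_comm (exp _)]
        gcongr
        refine hmgf.trans_eq (congrArg exp ?_)
        push_cast
        rw [Real.norm_eq_abs, div_pow, sq_abs]
        ring

theorem card_filter_le_of_sum_exp_mul_le {ι : Type*} {P : Finset ι} {f : ι → ℝ} {N μ c : ℝ}
    (hc : 0 ≤ c) (hmgf : ∀ x, ∑ i ∈ P, exp (x * f i) ≤ N * exp (x * μ + c * x ^ 2 / 8))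
    {s : ℝ} (hs : 0 ≤ s) : #{i ∈ P | μ + s ≤ f i} ≤ N * exp (-2 * s ^ 2 / c) := by
  set x := 4 * s / c
  have hx : 0 ≤ x := by positivity
  have hexponent : x * μ + c * x ^ 2 / 8 - x * (μ + s) = -2 * s ^ 2 / c := by
    rcases hc.eq_or_lt with rfl | hc
    · simp [x]
    · simp only [x]
      field_simp
      ring
  calc (#{i ∈ P | μ + s ≤ f i} : ℝ)
      = ∑ i ∈ P with μ + s ≤ f i, 1 := by simp
    _ ≤ ∑ i ∈ P with μ + s ≤ f i, exp (x * f i) / exp (x * (μ + s)) :=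
        sum_le_sum fun i hi => by
          rw [one_le_div (exp_pos _)]
          exact exp_le_exp.2 (mul_le_mul_of_nonneg_left (mem_filter.1 hi).2 hx)
    _ ≤ (∑ i ∈ P, exp (x * f i)) / exp (x * (μ + s)) := by
        rw [← sum_div]
        exact div_le_div_of_nonneg_right (sum_le_sum_of_subset_of_nonneg (filter_subset _ _)
          fun _ _ _ => (exp_pos _).le) (exp_pos _).le
    _ ≤ N * exp (x * μ + c * x ^ 2 / 8) / exp (x * (μ + s)) := by gcongr; exact hmgf x
    _ = N * exp (-2 * s ^ 2 / c) := by rw [mul_div_assoc, ← exp_sub, hexponent]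

theorem sum_div_le_sqrt_of_sum_exp_mul_le {ι : Type*} {P A : Finset ι} {f : ι → ℝ} {N c a : ℝ}
    (hN : 0 < N) (hc : 0 < c)
    (hmgf : ∀ x, ∑ i ∈ P, exp (x * f i) ≤ N * exp (x * ((∑ i ∈ P, f i) / N) + c * x ^ 2 / 8))
    (hAP : A ⊆ P) (hfA : ∀ i ∈ A, f i ≤ 0) (ha : 0 < a) (hA : a * N ≤ #A) :
    (∑ i ∈ P, f i) / N ≤ √(c / 2 * log (1 / a)) := by
  set μ := (∑ i ∈ P, f i) / N
  rcases le_or_gt μ 0 with hμ | hμ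
  · exact hμ.trans (sqrt_nonneg _)
  -- the lower tail of `f`, i.e. the upper tail of `-f`, contains `A`
  have hlower := card_filter_le_of_sum_exp_mul_le (f := fun i => -f i) (μ := -μ) hc.le
    (fun x => by simpa [mul_neg, neg_mul] using hmgf (-x)) hμ.le
  have hAsub : A ⊆ {i ∈ P | -μ + μ ≤ -f i} := fun i hi =>
    mem_filter.2 ⟨hAP hi, by linarith [hfA i hi]⟩
  have hexp : a ≤ exp (-2 * μ ^ 2 / c) := by
    have := hA.trans ((Nat.cast_le.2 (card_le_card hAsub)).trans hlower)
    rwa [mul_comm, mul_le_mul_iff_right₀ hN] at this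
  rw [← log_le_log_iff ha (exp_pos _), log_exp, le_div_iff₀ hc] at hexp
  rw [one_div, log_inv]
  exact le_sqrt_of_sq_le (by nlinarith)

theorem card_filter_lt_le_of_sum_exp_mul_le {ι : Type*} {P A : Finset ι} {f : ι → ℝ} {N c a h : ℝ}
    (hN : 0 < N) (hc : 0 < c)
    (hmgf : ∀ x, ∑ i ∈ P, exp (x * f i) ≤ N * exp (x * ((∑ i ∈ P, f i) / N) + c * x ^ 2 / 8))
    (hAP : A ⊆ P) (hfA : ∀ i ∈ A, f i ≤ 0) (ha : 0 < a) (hA : a * N ≤ #A)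
    (hh : √(c / 2 * log (1 / a)) < h) :
    #{i ∈ P | h < f i} ≤ N * exp (-2 * (h - √(c / 2 * log (1 / a))) ^ 2 / c) := by
  have hμ := sum_div_le_sqrt_of_sum_exp_mul_le hN hc hmgf hAP hfA ha hA
  set μ := (∑ i ∈ P, f i) / N
  set h₀ := √(c / 2 * log (1 / a))
  have hupper := card_filter_le_of_sum_exp_mul_le hc.le hmgf (s := h - μ) (by linarith)
  calc (#{i ∈ P | h < f i} : ℝ) ≤ #{i ∈ P | μ + (h - μ) ≤ f i} := by
        gcongr with i
        intro hi
        linarith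
    _ ≤ N * exp (-2 * (h - μ) ^ 2 / c) := hupper
    _ ≤ N * exp (-2 * (h - h₀) ^ 2 / c) := by
        have : (h - h₀) ^ 2 ≤ (h - μ) ^ 2 := pow_le_pow_left₀ (by linarith) (by linarith) 2
        exact mul_le_mul_of_nonneg_left
          (exp_le_exp.2 (div_le_div_of_nonneg_right (by linarith) hc.le)) hN.le

theorem SimpleGraph.inf'_dist_le_add_one {V : Type*} {G : SimpleGraph V} {A : Finset V}
    (hA : A.Nonempty) {m m' : V} (h : G.Adj m m') :
    A.inf' hA (G.dist · m') ≤ A.inf' hA (G.dist · m) + 1 := by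
  obtain ⟨x, hx, hxm⟩ := exists_mem_eq_inf' hA (G.dist · m)
  rw [hxm]
  calc A.inf' hA (G.dist · m') ≤ G.dist x m' := inf'_le _ hx
    _ ≤ G.dist x m + G.dist m m' := h.reachable.dist_triangle_right x
    _ = G.dist x m + 1 := by rw [SimpleGraph.dist_eq_one_iff_adj.2 h]

namespace PerfectMatchings

variable {α : Type*} {S : Finset α} {m m' : Finset (Finset α)}

def IsPMOn (S : Finset α) (m : Finset (Finset α)) : Prop :=
  (∀ e ∈ m, #e = 2 ∧ e ⊆ S) ∧ ∀ v ∈ S, ∃! e, e ∈ m ∧ v ∈ e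

theorem IsPMOn.eq_of_mem (hm : IsPMOn S m) {e e' : Finset α} (he : e ∈ m) (he' : e' ∈ m)
    {v : α} (hv : v ∈ e) (hv' : v ∈ e') : e = e' :=
  (hm.2 v ((hm.1 e he).2 hv)).unique ⟨he, hv⟩ ⟨he', hv'⟩

theorem IsPMOn.card_eq (hm : IsPMOn S m) : #S = 2 * #m := by
  classical
  have hS : S = m.biUnion id := by
    ext v
    simp only [mem_biUnion, id]
    exact ⟨fun hv => (hm.2 v hv).exists, fun ⟨e, he, hve⟩ => (hm.1 e he).2 hve⟩
  rw [hS, card_biUnion (t := id) fun e he e' he' hne =>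
      disjoint_left.2 fun v hv hv' => hne (hm.eq_of_mem he he' hv hv')]
  exact (sum_const_nat fun e he => (hm.1 e he).1).trans (mul_comm _ _)

theorem isPMOn_empty_iff : IsPMOn ∅ m ↔ m = ∅ := by
  refine ⟨fun hm => eq_empty_of_forall_notMem fun e he => ?_, fun h => by simp [h, IsPMOn]⟩
  simpa [subset_empty.1 (hm.1 e he).2] using (hm.1 e he).1

theorem IsPMOn.eq_of_card_le_two (hm : IsPMOn S m) (hm' : IsPMOn S m') (hS : #S ≤ 2) :
    m = m' := by
  have eq_of_mem : ∀ {m}, IsPMOn S m → ∀ e ∈ m, e = S := fun hm e he =>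
    eq_of_subset_of_card_le (hm.1 e he).2 ((hm.1 e he).1 ▸ hS)
  have subset : ∀ {m m'}, IsPMOn S m → IsPMOn S m' → m ⊆ m' := by
    intro m m' hm hm' e he
    obtain ⟨v, hv⟩ : S.Nonempty := by
      rw [← eq_of_mem hm e he, ← card_pos, (hm.1 e he).1]; norm_num
    obtain ⟨e', he', -⟩ := (hm'.2 v hv).exists
    rwa [eq_of_mem hm e he, ← eq_of_mem hm' e' he']
  exact (subset hm hm').antisymm (subset hm' hm)

open scoped Classical in
noncomputable def perfectMatchings (S : Finset α) : Finset (Finset (Finset α)) :=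
  {m ∈ S.powerset.powerset | IsPMOn S m}

@[simp]
theorem mem_perfectMatchings : m ∈ perfectMatchings S ↔ IsPMOn S m := by
  simp only [perfectMatchings, mem_filter, mem_powerset, and_iff_right_iff_imp]
  exact fun hm e he => mem_powerset.2 (hm.1 e he).2

theorem perfectMatchings_empty : perfectMatchings (∅ : Finset α) = {∅} := by
  ext m
  simp [isPMOn_empty_iff]

variable [DecidableEq α]

theorem IsPMOn.exists_pair_mem (hm : IsPMOn S m) {v : α} (hv : v ∈ S) :
    ∃ w ∈ S, w ≠ v ∧ {v, w} ∈ m := by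
  obtain ⟨e, he, hve⟩ := (hm.2 v hv).exists
  obtain ⟨w, hw⟩ := card_eq_one.1 (by rw [card_erase_of_mem hve, (hm.1 e he).1] :
    #(e.erase v) = 1)
  have hwe : w ∈ e.erase v := hw ▸ mem_singleton_self w
  refine ⟨w, (hm.1 e he).2 (mem_of_mem_erase hwe), ne_of_mem_erase hwe, ?_⟩
  rwa [← hw, insert_erase hve]

theorem IsPMOn.erase (hm : IsPMOn S m) {e : Finset α} (he : e ∈ m) :
    IsPMOn (S \ e) (m.erase e) := by
  refine ⟨fun f hf => ⟨(hm.1 f (mem_of_mem_erase hf)).1, fun x hx => mem_sdiff.2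
    ⟨(hm.1 f (mem_of_mem_erase hf)).2 hx, fun hxe =>
      ne_of_mem_erase hf (hm.eq_of_mem (mem_of_mem_erase hf) he hx hxe)⟩⟩, fun u hu => ?_⟩
  obtain ⟨huS, hue⟩ := mem_sdiff.1 hu
  obtain ⟨f, ⟨hf, huf⟩, huniq⟩ := hm.2 u huS
  exact ⟨f, ⟨mem_erase.2 ⟨by rintro rfl; exact hue huf, hf⟩, huf⟩,
    fun f' ⟨hf', huf'⟩ => huniq f' ⟨mem_of_mem_erase hf', huf'⟩⟩

theorem IsPMOn.notMem {e : Finset α} (hm : IsPMOn (S \ e) m) (he : e.Nonempty) : e ∉ m :=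
  fun hem => by
    obtain ⟨x, hx⟩ := he
    exact (mem_sdiff.1 ((hm.1 e hem).2 hx)).2 hx

theorem IsPMOn.insert {e : Finset α} (hm : IsPMOn (S \ e) m) (heS : e ⊆ S) (he : #e = 2) :
    IsPMOn S (insert e m) := by
  refine ⟨fun f hf => ?_, fun u hu => ?_⟩
  · rcases mem_insert.1 hf with rfl | hf
    · exact ⟨he, heS⟩
    · exact ⟨(hm.1 f hf).1, (hm.1 f hf).2.trans sdiff_subset⟩
  by_cases hue : u ∈ e
  · refine ⟨e, ⟨mem_insert_self e m, hue⟩, fun f ⟨hf, huf⟩ => ?_⟩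
    rcases mem_insert.1 hf with rfl | hf
    · rfl
    · exact absurd hue (mem_sdiff.1 ((hm.1 f hf).2 huf)).2
  obtain ⟨f, ⟨hf, huf⟩, huniq⟩ := hm.2 u (mem_sdiff.2 ⟨hu, hue⟩)
  refine ⟨f, ⟨mem_insert_of_mem hf, huf⟩, fun f' ⟨hf', huf'⟩ => ?_⟩
  rcases mem_insert.1 hf' with rfl | hf'
  · exact absurd huf' hue
  · exact huniq f' ⟨hf', huf'⟩

theorem IsPMOn.smul (hm : IsPMOn S m) (σ : Perm α) : IsPMOn (σ • S) (σ • m) := by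
  refine ⟨fun e he => ?_, fun v hv => ?_⟩
  · obtain ⟨f, hf, rfl⟩ := mem_smul_finset.1 he
    exact ⟨by rw [card_smul_finset, (hm.1 f hf).1], smul_finset_subset_smul_finset (hm.1 f hf).2⟩
  rw [← inv_smul_mem_iff] at hv
  obtain ⟨e, ⟨he, hve⟩, huniq⟩ := hm.2 _ hv
  refine ⟨σ • e, ⟨smul_mem_smul_finset he, by rwa [← inv_smul_mem_iff]⟩, fun e' ⟨he', hve'⟩ => ?_⟩
  rw [← inv_smul_eq_iff]
  exact huniq _ ⟨inv_smul_mem_iff.2 he', (smul_mem_smul_finset_iff σ⁻¹).2 hve'⟩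

theorem swap_smul_finset_of_mem {w w' : α} (hw : w ∈ S) (hw' : w' ∈ S) : swap w w' • S = S := by
  ext x
  rw [← inv_smul_mem_iff, swap_inv, Perm.smul_def, swap_apply_def]
  split_ifs <;> simp_all

theorem swap_smul_finset_of_notMem {w w' : α} {e : Finset α} (hw : w ∉ e) (hw' : w' ∉ e) :
    swap w w' • e = e := by
  ext x
  rw [← inv_smul_mem_iff, swap_inv, Perm.smul_def, swap_apply_def]
  split_ifs <;> simp_all

theorem swap_smul_pair {v w w' : α} (hvw : v ≠ w) (hvw' : v ≠ w') :
    swap w w' • ({v, w} : Finset α) = {v, w'} := by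
  rw [smul_finset_insert, smul_finset_singleton, Perm.smul_def, Perm.smul_def,
    swap_apply_of_ne_of_ne hvw hvw', swap_apply_left]

theorem pair_mem_swap_smul_iff {v w w' : α} (hvw : v ≠ w) (hvw' : v ≠ w') :
    {v, w'} ∈ swap w w' • m ↔ {v, w} ∈ m := by
  rw [← swap_smul_pair hvw hvw', smul_mem_smul_finset_iff]

theorem IsPMOn.swap_smul (hm : IsPMOn S m) {w w' : α} (hw : w ∈ S) (hw' : w' ∈ S) :
    IsPMOn S (swap w w' • m) :=
  swap_smul_finset_of_mem hw hw' ▸ hm.smul _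

def pmGraph (S : Finset α) : SimpleGraph (Finset (Finset α)) where
  Adj m m' := m ≠ m' ∧ IsPMOn S m ∧ IsPMOn S m' ∧ #(m ∩ m') = #S / 2 - 2
  symm := ⟨fun _ _ h => ⟨h.1.symm, h.2.2.1, h.2.1, by rw [inter_comm]; exact h.2.2.2⟩⟩
  loopless := ⟨fun _ h => h.1 rfl⟩

theorem pmGraph_adj : (pmGraph S).Adj m m' ↔
    m ≠ m' ∧ IsPMOn S m ∧ IsPMOn S m' ∧ #(m ∩ m') = #S / 2 - 2 :=
  Iff.rfl

theorem IsPMOn.of_reachable (hm : IsPMOn S m) (h : (pmGraph S).Reachable m m') :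
    IsPMOn S m' := by
  obtain ⟨p⟩ := h
  induction p with
  | nil => exact hm
  | cons h _ ih => exact ih (pmGraph_adj.1 h).2.2.1

theorem IsPMOn.ne_of_pair_mem (hm : IsPMOn S m) {v w : α} (h : {v, w} ∈ m) : v ≠ w := by
  rintro rfl
  simpa using (hm.1 _ h).1

theorem IsPMOn.pair_notMem (hm : IsPMOn S m) {v w w' : α} (hvw : {v, w} ∈ m) (hw'v : w' ≠ v)
    (hw'w : w' ≠ w) : {v, w'} ∉ m := fun h => by
  have : w' ∈ ({v, w} : Finset α) := hm.eq_of_mem (v := v) h hvw (by simp) (by simp) ▸ by simp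
  simp [hw'v, hw'w] at this

theorem IsPMOn.inter_swap_smul (hm : IsPMOn S m) {v w w' u : α} (hvw : {v, w} ∈ m)
    (hw'u : {w', u} ∈ m) (hw'v : w' ≠ v) (hw'w : w' ≠ w) (huv : u ≠ v) (huw : u ≠ w)
    (huw' : u ≠ w') : m ∩ swap w w' • m = (m.erase {v, w}).erase {w', u} := by
  ext e
  rw [mem_inter, ← inv_smul_mem_iff, swap_inv, mem_erase, mem_erase]
  constructor
  · rintro ⟨he, hse⟩
    refine ⟨?_, ?_, he⟩
    · rintro rfl
      rw [smul_finset_insert, smul_finset_singleton, Perm.smul_def, Perm.smul_def,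
        swap_apply_right, swap_apply_of_ne_of_ne huw huw'] at hse
      exact hm.pair_notMem (by rwa [pair_comm]) huw huv hse
    · rintro rfl
      rw [swap_smul_pair (hm.ne_of_pair_mem hvw) hw'v.symm] at hse
      exact hm.pair_notMem hvw hw'v hw'w hse
  · rintro ⟨he2, he1, he⟩
    refine ⟨he, ?_⟩
    rwa [swap_smul_finset_of_notMem (fun hwe => he1 (hm.eq_of_mem he hvw hwe (by simp)))
      (fun hwe => he2 (hm.eq_of_mem he hw'u hwe (by simp)))]

theorem pmGraph_adj_swap_smul (hm : IsPMOn S m) {v w w' : α} (hvw : {v, w} ∈ m)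
    (hw' : w' ∈ S) (hw'v : w' ≠ v) (hw'w : w' ≠ w) : (pmGraph S).Adj m (swap w w' • m) := by
  obtain ⟨u, -, huw', hw'u⟩ := hm.exists_pair_mem hw'
  have hne : ({v, w} : Finset α) ≠ {w', u} := fun h => by
    have : w' ∈ ({v, w} : Finset α) := h ▸ by simp
    simp [hw'v, hw'w] at this
  have huv : u ≠ v := by
    rintro rfl
    exact hne (hm.eq_of_mem (v := u) hvw hw'u (by simp) (by simp))
  have huw : u ≠ w := by
    rintro rfl
    exact hne (hm.eq_of_mem (v := u) hvw hw'u (by simp) (by simp))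
  refine pmGraph_adj.2 ⟨fun h => ?_, hm, hm.swap_smul ((hm.1 _ hvw).2 (by simp)) hw', ?_⟩
  · exact hm.pair_notMem hvw hw'v hw'w
      (h ▸ (pair_mem_swap_smul_iff (hm.ne_of_pair_mem hvw) hw'v.symm).2 hvw)
  · rw [hm.inter_swap_smul hvw hw'u hw'v hw'w huv huw huw',
      card_erase_of_mem (mem_erase.2 ⟨hne.symm, hw'u⟩), card_erase_of_mem hvw, hm.card_eq]
    omega

theorem pmGraph_adj_insert {e : Finset α} (heS : e ⊆ S) (he : #e = 2) {m₀ m₀' : Finset (Finset α)}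
    (h : (pmGraph (S \ e)).Adj m₀ m₀') : (pmGraph S).Adj (insert e m₀) (insert e m₀') := by
  obtain ⟨hne, hm₀, hm₀', hcard⟩ := pmGraph_adj.1 h
  have he₀ : e ∉ m₀ := hm₀.notMem (card_pos.1 (by omega))
  have he₀' : e ∉ m₀' := hm₀'.notMem (card_pos.1 (by omega))
  have hlarge : 2 < #(S \ e) := by
    by_contra! hS
    exact hne (hm₀.eq_of_card_le_two hm₀' hS)
  have hS : #S = #(S \ e) + 2 := by
    rw [card_sdiff_of_subset heS, he]
    have := card_le_card heS
    omega
  have := hm₀.card_eq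
  refine pmGraph_adj.2 ⟨fun h => hne ?_, hm₀.insert heS he, hm₀'.insert heS he, ?_⟩
  · rw [← erase_insert he₀, h, erase_insert he₀']
  · rw [← insert_inter_distrib, card_insert_of_notMem fun h => he₀ (mem_inter.1 h).1, hcard, hS]
    omega

theorem reachable_insert {e : Finset α} (heS : e ⊆ S) (he : #e = 2) {m₀ m₀' : Finset (Finset α)}
    (h : (pmGraph (S \ e)).Reachable m₀ m₀') :
    (pmGraph S).Reachable (insert e m₀) (insert e m₀') := by
  obtain ⟨p⟩ := h
  induction p with
  | nil => rfl
  | cons h _ ih => exact (pmGraph_adj_insert heS he h).reachable.trans ih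

theorem IsPMOn.reachable (hm : IsPMOn S m) (hm' : IsPMOn S m') : (pmGraph S).Reachable m m' := by
  induction S using Finset.strongInduction generalizing m m' with | H S ih => ?_
  rcases S.eq_empty_or_nonempty with rfl | ⟨v, hv⟩
  · rw [isPMOn_empty_iff.1 hm, isPMOn_empty_iff.1 hm']
  obtain ⟨w, hw, hwv, hvw⟩ := hm.exists_pair_mem hv
  obtain ⟨w', hw', hw'v, hvw'⟩ := hm'.exists_pair_mem hv
  have hpair : ({v, w'} : Finset α) ⊆ S := insert_subset hv (singleton_subset_iff.2 hw')
  have hcard : #({v, w'} : Finset α) = 2 := card_pair hw'v.symm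
  have reachable_of_mem : ∀ {m₁ m₂}, IsPMOn S m₁ → IsPMOn S m₂ → {v, w'} ∈ m₁ → {v, w'} ∈ m₂ →
      (pmGraph S).Reachable m₁ m₂ := fun hm₁ hm₂ h₁ h₂ => by
    have := reachable_insert hpair hcard (ih _ (sdiff_ssubset hpair (by simp))
      (hm₁.erase h₁) (hm₂.erase h₂))
    rwa [insert_erase h₁, insert_erase h₂] at this
  rcases eq_or_ne w' w with rfl | hw'w
  · exact reachable_of_mem hm hm' hvw hvw'
  · exact (pmGraph_adj_swap_smul hm hvw hw' hw'v hw'w).reachable.trans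
      (reachable_of_mem (hm.swap_smul hw hw') hm'
        ((pair_mem_swap_smul_iff hwv.symm hw'v.symm).2 hvw) hvw')

noncomputable def perfectMatchingsWith (S e : Finset α) : Finset (Finset (Finset α)) :=
  {m ∈ perfectMatchings S | e ∈ m}

@[simp]
theorem mem_perfectMatchingsWith {e : Finset α} :
    m ∈ perfectMatchingsWith S e ↔ IsPMOn S m ∧ e ∈ m := by
  simp [perfectMatchingsWith]

theorem sum_perfectMatchings_eq_sum_sum {M : Type*} [AddCommMonoid M] {v : α} (hv : v ∈ S)
    (F : Finset (Finset α) → M) :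
    ∑ m ∈ perfectMatchings S, F m = ∑ w ∈ S.erase v, ∑ m ∈ perfectMatchingsWith S {v, w}, F m := by
  rw [← sum_biUnion]
  · congr 1
    ext m
    simp only [mem_perfectMatchings, mem_biUnion, mem_erase, mem_perfectMatchingsWith]
    refine ⟨fun hm => ?_, fun ⟨_, _, hm, _⟩ => hm⟩
    obtain ⟨w, hw, hwv, hvw⟩ := hm.exists_pair_mem hv
    exact ⟨w, ⟨hwv, hw⟩, hm, hvw⟩
  · intro w hw w' _ hww'
    refine disjoint_left.2 fun m hm hm' => hww' ?_
    rw [mem_perfectMatchingsWith] at hm hm'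
    have : w ∈ ({v, w'} : Finset α) :=
      hm.1.eq_of_mem (v := v) hm.2 hm'.2 (by simp) (by simp) ▸ by simp
    simpa [(mem_erase.1 hw).1] using this

theorem sum_perfectMatchingsWith {M : Type*} [AddCommMonoid M] {e : Finset α} (heS : e ⊆ S)
    (he : #e = 2) (F : Finset (Finset α) → M) :
    ∑ m ∈ perfectMatchingsWith S e, F m = ∑ m₀ ∈ perfectMatchings (S \ e), F (insert e m₀) := by
  have he₀ : e.Nonempty := card_pos.1 (by omega)
  refine sum_nbij' (fun m => m.erase e) (insert e) ?_ ?_ ?_ ?_ ?_ <;>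
    simp only [mem_perfectMatchingsWith, mem_perfectMatchings]
  · exact fun m hm => hm.1.erase hm.2
  · exact fun m₀ hm₀ => ⟨hm₀.insert heS he, mem_insert_self e m₀⟩
  · exact fun m hm => insert_erase hm.2
  · exact fun m₀ hm₀ => erase_insert (hm₀.notMem he₀)
  · exact fun m hm => by rw [insert_erase hm.2]

theorem card_perfectMatchingsWith {e : Finset α} (heS : e ⊆ S) (he : #e = 2) :
    #(perfectMatchingsWith S e) = #(perfectMatchings (S \ e)) := by
  simpa only [card_eq_sum_ones] using sum_perfectMatchingsWith heS he (fun _ => 1)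

theorem pair_subset_of_mem_erase {v w : α} (hv : v ∈ S) (hw : w ∈ S.erase v) :
    ({v, w} : Finset α) ⊆ S :=
  insert_subset hv (singleton_subset_iff.2 (mem_of_mem_erase hw))

theorem card_sdiff_pair {k : ℕ} (hS : #S = 2 * (k + 1)) {v w : α} (hv : v ∈ S)
    (hw : w ∈ S.erase v) : #(S \ {v, w}) = 2 * k := by
  rw [card_sdiff_of_subset (pair_subset_of_mem_erase hv hw), card_pair (ne_of_mem_erase hw).symm,
    hS]
  omega

theorem card_perfectMatchings {k : ℕ} (hS : #S = 2 * k) :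
    #(perfectMatchings S) = oddFactorial k := by
  induction k generalizing S with
  | zero => simp [card_eq_zero.1 hS, perfectMatchings_empty, oddFactorial]
  | succ k ih =>
    obtain ⟨v, hv⟩ : S.Nonempty := card_pos.1 (by omega)
    have hfiber : ∀ w ∈ S.erase v, #(perfectMatchingsWith S {v, w}) = oddFactorial k :=
      fun w hw => by rw [card_perfectMatchingsWith (pair_subset_of_mem_erase hv hw)
        (card_pair (ne_of_mem_erase hw).symm), ih (card_sdiff_pair hS hv hw)]
    have := sum_perfectMatchings_eq_sum_sum hv (fun _ => 1)
    simp only [← card_eq_sum_ones] at this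
    rw [this, sum_congr rfl hfiber, sum_const, card_erase_of_mem hv, hS, smul_eq_mul, oddFactorial,
      show 2 * (k + 1) - 1 = 2 * k + 1 by omega]

theorem card_perfectMatchingsWith_pair {k : ℕ} (hS : #S = 2 * (k + 1)) {v w : α} (hv : v ∈ S)
    (hw : w ∈ S.erase v) : #(perfectMatchingsWith S {v, w}) = oddFactorial k := by
  rw [card_perfectMatchingsWith (pair_subset_of_mem_erase hv hw)
    (card_pair (ne_of_mem_erase hw).symm), card_perfectMatchings (card_sdiff_pair hS hv hw)]

theorem sum_perfectMatchingsWith_le_add_card {v w w' : α} (hw : w ∈ S) (hw' : w' ∈ S)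
    (hwv : w ≠ v) (hw'v : w' ≠ v) (hw'w : w' ≠ w) {f : Finset (Finset α) → ℝ}
    (hf : ∀ m m', (pmGraph S).Adj m m' → f m' ≤ f m + 1) :
    ∑ m ∈ perfectMatchingsWith S {v, w}, f m
      ≤ ∑ m ∈ perfectMatchingsWith S {v, w'}, f m + #(perfectMatchingsWith S {v, w}) := by
  have hswap : ∑ m ∈ perfectMatchingsWith S {v, w'}, f m
      = ∑ m ∈ perfectMatchingsWith S {v, w}, f (swap w w' • m) := by
    have hinv (m : Finset (Finset α)) : swap w w' • swap w w' • m = m := by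
      rw [smul_smul, swap_mul_self, one_smul]
    refine sum_nbij' (swap w w' • ·) (swap w w' • ·) ?_ ?_ (fun m _ => hinv m)
      (fun m _ => hinv m) (fun m _ => by rw [hinv]) <;> simp only [mem_perfectMatchingsWith]
    · refine fun m ⟨hm, hvw'⟩ => ⟨hm.swap_smul hw hw', ?_⟩
      rwa [swap_comm, pair_mem_swap_smul_iff hw'v.symm hwv.symm]
    · exact fun m ⟨hm, hvw⟩ =>
        ⟨hm.swap_smul hw hw', (pair_mem_swap_smul_iff hwv.symm hw'v.symm).2 hvw⟩
  rw [hswap, card_eq_sum_ones, Nat.cast_sum, ← sum_add_distrib]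
  refine sum_le_sum fun m hm => ?_
  rw [mem_perfectMatchingsWith] at hm
  simpa using hf _ _ (pmGraph_adj_swap_smul hm.1 hm.2 hw' hw'v hw'w).symm

theorem sum_perfectMatchingsWith_div_le {k : ℕ} (hS : #S = 2 * (k + 1)) {v w w' : α}
    (hv : v ∈ S) (hw : w ∈ S.erase v) (hw' : w' ∈ S.erase v) {f : Finset (Finset α) → ℝ}
    (hf : ∀ m m', (pmGraph S).Adj m m' → f m' ≤ f m + 1) :
    (∑ m ∈ perfectMatchingsWith S {v, w}, f m) / oddFactorial k
      ≤ (∑ m ∈ perfectMatchingsWith S {v, w'}, f m) / oddFactorial k + 1 := by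
  have hN : (0 : ℝ) < oddFactorial k := mod_cast oddFactorial_pos k
  rcases eq_or_ne w' w with rfl | hw'w
  · linarith
  rw [div_add_one hN.ne', div_le_div_iff_of_pos_right hN]
  simpa [card_perfectMatchingsWith_pair hS hv hw] using
    sum_perfectMatchingsWith_le_add_card (mem_of_mem_erase hw) (mem_of_mem_erase hw')
      (ne_of_mem_erase hw) (ne_of_mem_erase hw') hw'w hf

theorem sum_exp_mul_le {k : ℕ} (hS : #S = 2 * k) {f : Finset (Finset α) → ℝ}
    (hf : ∀ m m', (pmGraph S).Adj m m' → f m' ≤ f m + 1) (x : ℝ) :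
    ∑ m ∈ perfectMatchings S, exp (x * f m) ≤ oddFactorial k *
      exp (x * ((∑ m ∈ perfectMatchings S, f m) / oddFactorial k) + k * x ^ 2 / 8) := by
  induction k generalizing S f with
  | zero => simp [card_eq_zero.1 hS, perfectMatchings_empty, oddFactorial]
  | succ k ih =>
    obtain ⟨v, hv⟩ : S.Nonempty := card_pos.1 (by omega)
    -- `g w` is the mean of `f` over the matchings pairing `v` with `w`
    set g : α → ℝ := fun w => (∑ m ∈ perfectMatchingsWith S {v, w}, f m) / oddFactorial k
    have hfiber : ∀ w ∈ S.erase v, ∑ m ∈ perfectMatchingsWith S {v, w}, exp (x * f m)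
        ≤ oddFactorial k * exp (x * g w + k * x ^ 2 / 8) := by
      intro w hw
      have hsub := pair_subset_of_mem_erase hv hw
      have hcard := card_pair (ne_of_mem_erase hw).symm
      simp only [g, sum_perfectMatchingsWith hsub hcard]
      exact ih (card_sdiff_pair hS hv hw) fun m₀ m₀' h => hf _ _ (pmGraph_adj_insert hsub hcard h)
    obtain ⟨w₀, hw₀, hmin⟩ := exists_min_image (S.erase v) g (card_pos.1 (by
      rw [card_erase_of_mem hv]; omega))
    have hoeffding := sum_exp_mul_le_of_mem_Icc ⟨w₀, hw₀⟩
      (fun w hw => ⟨hmin w hw, sum_perfectMatchingsWith_div_le hS hv hw hw₀ hf⟩) x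
    have hmean : ∑ w ∈ S.erase v, g w = (∑ m ∈ perfectMatchings S, f m) / oddFactorial k := by
      rw [← sum_div, sum_perfectMatchings_eq_sum_sum hv]
    calc ∑ m ∈ perfectMatchings S, exp (x * f m)
        = ∑ w ∈ S.erase v, ∑ m ∈ perfectMatchingsWith S {v, w}, exp (x * f m) :=
          sum_perfectMatchings_eq_sum_sum hv _
      _ ≤ ∑ w ∈ S.erase v, oddFactorial k * exp (x * g w + k * x ^ 2 / 8) := sum_le_sum hfiber
      _ = oddFactorial k * exp (k * x ^ 2 / 8) * ∑ w ∈ S.erase v, exp (x * g w) := by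
          rw [mul_sum]
          refine sum_congr rfl fun w _ => ?_
          rw [exp_add]
          ring
      _ ≤ oddFactorial k * exp (k * x ^ 2 / 8) * (#(S.erase v) * exp
            (x * ((∑ w ∈ S.erase v, g w) / #(S.erase v)) + (g w₀ + 1 - g w₀) ^ 2 * x ^ 2 / 8)) := by
          gcongr
      _ = _ := by
          rw [hmean, card_erase_of_mem hv, hS, oddFactorial, add_sub_cancel_left, one_pow, one_mul,
            show 2 * (k + 1) - 1 = 2 * k + 1 by omega, mul_mul_mul_comm, ← exp_add]
          push_cast
          rw [mul_comm (oddFactorial k : ℝ)]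
          congr 2
          field_simp
          ring

theorem card_filter_inf'_dist_le_le_ncard {A : Finset (Finset (Finset α))} (hA : A.Nonempty)
    (hAS : ∀ x ∈ A, IsPMOn S x) (h : ℕ) :
    #{m ∈ perfectMatchings S | A.inf' hA ((pmGraph S).dist · m) ≤ h} ≤
      {m | ∃ x ∈ (A : Set (Finset (Finset α))),
        (pmGraph S).Reachable x m ∧ (pmGraph S).dist x m ≤ h}.ncard := by
  rw [← Set.ncard_coe_finset]
  refine Set.ncard_le_ncard (fun m hm => ?_) ((perfectMatchings S).finite_toSet.subset
    fun m ⟨x, hx, hxm, _⟩ => mem_perfectMatchings.2 ((hAS x hx).of_reachable hxm))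
  rw [coe_filter, Set.mem_ofPred, mem_perfectMatchings] at hm
  obtain ⟨x, hx, hxm⟩ := exists_mem_eq_inf' hA ((pmGraph S).dist · m)
  exact ⟨x, hx, (hAS x hx).reachable hm.1, hxm ▸ hm.2⟩

theorem isoperimetric_pmGraph {k : ℕ} (hS : #S = 2 * k) (hk : 0 < k)
    {A : Finset (Finset (Finset α))} (hAS : ∀ x ∈ A, IsPMOn S x) {a : ℝ} (ha : 0 < a)
    (hAcard : a * oddFactorial k ≤ #A) {h : ℕ} (hh : √(k / 2 * log (1 / a)) < h) :
    (1 - exp (-2 * (h - √(k / 2 * log (1 / a))) ^ 2 / k)) * oddFactorial k ≤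
      {m | ∃ x ∈ (A : Set (Finset (Finset α))),
        (pmGraph S).Reachable x m ∧ (pmGraph S).dist x m ≤ h}.ncard := by
  have hN : (0 : ℝ) < oddFactorial k := mod_cast oddFactorial_pos k
  have hA : A.Nonempty := card_pos.1 (mod_cast (mul_pos ha hN).trans_le hAcard)
  set f := fun m => A.inf' hA ((pmGraph S).dist · m)
  have hfA : ∀ x ∈ A, f x = 0 := fun x hx =>
    Nat.le_zero.1 ((inf'_le (fun y => (pmGraph S).dist y x) hx).trans_eq SimpleGraph.dist_self)
  have htail := card_filter_lt_le_of_sum_exp_mul_le (f := fun m => (f m : ℝ)) hN (by positivity)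
    (sum_exp_mul_le hS fun m m' hmm' => mod_cast SimpleGraph.inf'_dist_le_add_one hA hmm')
    (fun x hx => mem_perfectMatchings.2 (hAS x hx)) (fun x hx => by simp [hfA x hx]) ha hAcard hh
  have hsplit := card_filter_add_card_filter_not (s := perfectMatchings S) (f · ≤ h)
  rw [card_perfectMatchings hS] at hsplit
  simp only [not_le, Nat.cast_lt] at hsplit htail
  have hsplit' : (#{m ∈ perfectMatchings S | f m ≤ h} : ℝ) + #{m ∈ perfectMatchings S | h < f m}
      = oddFactorial k := mod_cast hsplit
  calc _ = (oddFactorial k : ℝ) - oddFactorial k * exp _ := by ring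
    _ ≤ #{m ∈ perfectMatchings S | f m ≤ h} := by linarith
    _ ≤ _ := mod_cast card_filter_inf'_dist_le_le_ncard hA hAS h

end PerfectMatchings

theorem upsilon_eq_pmGraph (n : ℕ) : Upsilon n = PerfectMatchings.pmGraph (range (2 * n)) := by
  ext m m'
  simp only [Upsilon, PerfectMatchings.pmGraph_adj, card_range, Nat.mul_div_cancel_left n two_pos]
  rfl

open PerfectMatchings in
theorem isoperimetric_Upsilon_general (n : ℕ) (a : ℝ) (ha0 : 0 < a)
    (X : Set (Finset (Finset ℕ))) (hX : ∀ m ∈ X, IsPM n m)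
    (hXCard : a * (oddFactorial n : ℝ) ≤ (X.ncard : ℝ))
    (h : ℕ) (hh : Real.sqrt ((n : ℝ) / 2 * Real.log (1 / a)) < (h : ℝ)) :
    (1 - Real.exp (-2 * ((h : ℝ) - Real.sqrt ((n : ℝ) / 2 * Real.log (1 / a))) ^ 2 / (n : ℝ)))
        * (oddFactorial n : ℝ)
      ≤ (({m | ∃ x ∈ X, (Upsilon n).Reachable x m ∧ (Upsilon n).dist x m ≤ h} :
          Set (Finset (Finset ℕ))).ncard : ℝ) := by
  rcases Nat.eq_zero_or_pos n with rfl | hn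
  · simp
  obtain ⟨A, rfl⟩ := ((perfectMatchings (range (2 * n))).finite_toSet.subset
    fun m hm => mem_perfectMatchings.2 (hX m hm)).exists_finset_coe
  rw [Set.ncard_coe_finset] at hXCard
  rw [upsilon_eq_pmGraph]
  exact isoperimetric_pmGraph (card_range _) hn hX ha0 hXCard hh

theorem isoperimetric_Upsilon (n : ℕ) (a : ℝ) (ha0 : 0 < a) (ha1 : a < 1)
    (X : Set (Finset (Finset ℕ))) (hX : ∀ m ∈ X, IsPM n m)
    (hXCard : a * (oddFactorial n : ℝ) ≤ (X.ncard : ℝ))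
    (h : ℕ) (hh : Real.sqrt ((n : ℝ) / 2 * Real.log (1 / a)) < (h : ℝ)) :
    (1 - Real.exp (-2 * ((h : ℝ) - Real.sqrt ((n : ℝ) / 2 * Real.log (1 / a))) ^ 2 / (n : ℝ)))
        * (oddFactorial n : ℝ)
      ≤ (({m | ∃ x ∈ X, (Upsilon n).Reachable x m ∧ (Upsilon n).dist x m ≤ h} :
          Set (Finset (Finset ℕ))).ncard : ℝ) :=
  isoperimetric_Upsilon_general n a ha0 X hX hXCard h hh
end

section
/- Let Γ = (V,E) be a finite graph and let A be a real symmetric matrix indexed by V with A_{uv} = 0 whenever u = v or {u,v} ∉ E. Suppose the all-ones vector is an eigenvector of A with eigenvalue η1, that η1 is the largest eigenvalue of A, and let η_min be the smallest eigenvalue of A, with η_min < η1. Then every independent set S of Γ satisfies |S| ≤ |V| · (−η_min)/(η1 − η_min). -/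
/-!
Since every eigenvalue of `A` is at least `ηmin`, the matrix `A - ηmin • 1`
is positive semidefinite. Evaluate its quadratic form at `n • 1_S - |S| • 1`, where `n = |V|`:
independence of `S` gives `1_Sᵀ A 1_S = 0`, and `A 1 = η1 • 1` evaluates the remaining terms, so
`ηmin · n|S|(n - |S|) ≤ -η1 · n|S|²`, i.e. `|S|² (η1 - ηmin) ≤ -ηmin · n|S|`. Cancelling `|S|`
leaves the bound; the case `S = ∅` needs `ηmin ≤ 0`, which holds because `A` has zero diagonal.
-/

open Matrix Finset

namespace Matrix

variable {V : Type*} [Fintype V] [DecidableEq V]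

theorem IsSymm.mul_dotProduct_self_le_dotProduct_mulVec {A : Matrix V V ℝ}
    (hA : A.IsSymm) {c : ℝ}
    (hc : ∀ (η : ℝ) (v : V → ℝ), v ≠ 0 → A *ᵥ v = η • v → c ≤ η) (x : V → ℝ) :
    c * (x ⬝ᵥ x) ≤ x ⬝ᵥ (A *ᵥ x) := by
  have hB : (A - c • 1).IsHermitian :=
    isHermitian_iff_isSymm.mpr (hA.sub (isSymm_one.smul c))
  have hpsd : (A - c • 1).PosSemidef := by
    refine hB.posSemidef_iff_eigenvalues_nonneg.mpr fun i => ?_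
    set v : V → ℝ := ⇑(hB.eigenvectorBasis i)
    have hv : v ≠ 0 := fun h =>
      hB.eigenvectorBasis.orthonormal.ne_zero i (by ext j; exact congrFun h j)
    have hAv : A *ᵥ v = (hB.eigenvalues i + c) • v := by
      have := hB.mulVec_eigenvectorBasis i
      rw [sub_mulVec, smul_mulVec, one_mulVec] at this
      rw [add_smul, ← this, sub_add_cancel]
    simpa using hc _ v hv hAv
  have := hpsd.dotProduct_mulVec_nonneg x
  simp only [sub_mulVec, smul_mulVec, one_mulVec, dotProduct_sub, dotProduct_smul, star_trivial,
    smul_eq_mul] at this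
  linarith

theorem IsSymm.le_diag_of_forall_eigenvalue_ge {A : Matrix V V ℝ}
    (hA : A.IsSymm) {c : ℝ}
    (hc : ∀ (η : ℝ) (v : V → ℝ), v ≠ 0 → A *ᵥ v = η • v → c ≤ η) (u : V) : c ≤ A u u := by
  simpa using hA.mul_dotProduct_self_le_dotProduct_mulVec hc (Pi.single u 1)

theorem indicator_dotProduct_mulVec_indicator_eq_zero {A : Matrix V V ℝ} {S : Finset V}
    (hS : ∀ u ∈ S, ∀ v ∈ S, A u v = 0) :
    (S : Set V).indicator 1 ⬝ᵥ (A *ᵥ (S : Set V).indicator 1) = 0 := by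
  simp only [dotProduct, mulVec, mul_sum, Set.indicator_apply, mem_coe]
  refine sum_eq_zero fun u _ => sum_eq_zero fun v _ => ?_
  by_cases hu : u ∈ S <;> by_cases hv : v ∈ S <;> simp [hu, hv, hS]

theorem IsSymm.sq_card_mul_sub_le [Nonempty V] {A : Matrix V V ℝ} (hA : A.IsSymm) {η₁ c : ℝ}
    (hones : A *ᵥ 1 = η₁ • 1) (hc : ∀ x : V → ℝ, c * (x ⬝ᵥ x) ≤ x ⬝ᵥ (A *ᵥ x))
    {S : Finset V} (hS : ∀ u ∈ S, ∀ v ∈ S, A u v = 0) :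
    (#S : ℝ) ^ 2 * (η₁ - c) ≤ -c * Fintype.card V * #S := by
  set χ : V → ℝ := (S : Set V).indicator 1
  set n : ℝ := (Fintype.card V : ℝ)
  set s : ℝ := (#S : ℝ)
  have hχχ : χ ⬝ᵥ χ = s := by simp [χ, s, dotProduct, Set.indicator_apply]
  have h1χ : 1 ⬝ᵥ χ = s := by simp [χ, s, one_dotProduct, Set.indicator_apply]
  have hχ1 : χ ⬝ᵥ 1 = s := by rw [dotProduct_comm, h1χ]
  have h11 : (1 : V → ℝ) ⬝ᵥ 1 = n := by simp [n]
  have hAχ : 1 ⬝ᵥ (A *ᵥ χ) = η₁ * s := by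
    rw [dotProduct_mulVec, ← mulVec_transpose, hA.eq, hones, smul_dotProduct, h1χ, smul_eq_mul]
  have hχAχ : χ ⬝ᵥ (A *ᵥ χ) = 0 := indicator_dotProduct_mulVec_indicator_eq_zero hS
  have key := hc (n • χ - s • 1)
  simp only [mulVec_sub, mulVec_smul, dotProduct_sub, sub_dotProduct, dotProduct_smul,
    smul_dotProduct, smul_eq_mul, hones, hχAχ, hAχ, hχχ, hχ1, h1χ, h11] at key
  have hn : 0 < n := by positivity
  nlinarith

end Matrix

theorem ratio_bound_general {V : Type*} [Fintype V] [DecidableEq V]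
    (G : SimpleGraph V) (A : Matrix V V ℝ)
    (hsymm : A.IsSymm)
    (hzero : ∀ u v : V, ¬ G.Adj u v → A u v = 0)
    (η1 ηmin : ℝ)
    (hones : A.mulVec (fun _ => 1) = η1 • (fun _ => (1 : ℝ)))
    (hmin : ∀ (η : ℝ) (v : V → ℝ), v ≠ 0 → A.mulVec v = η • v → ηmin ≤ η)
    (hlt : ηmin < η1)
    (S : Finset V) (hS : ∀ u ∈ S, ∀ v ∈ S, ¬ G.Adj u v) :
    (S.card : ℝ) ≤ (Fintype.card V : ℝ) * (-ηmin) / (η1 - ηmin) := by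
  cases isEmpty_or_nonempty V with
  | inl _ => simp [eq_empty_of_isEmpty S]
  | inr hV =>
    have hηmin : ηmin ≤ 0 := by
      obtain ⟨u⟩ := hV
      exact hzero u u G.irrefl ▸ hsymm.le_diag_of_forall_eigenvalue_ge hmin u
    have key := hsymm.sq_card_mul_sub_le hones (hsymm.mul_dotProduct_self_le_dotProduct_mulVec hmin)
      fun u hu v hv => hzero u v (hS u hu v hv)
    rw [le_div_iff₀ (sub_pos.mpr hlt)]
    rcases (Nat.cast_nonneg (α := ℝ) #S).eq_or_lt with hS₀ | hS₀
    · rw [← hS₀]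
      nlinarith
    · nlinarith

theorem ratio_bound {V : Type*} [Fintype V] [DecidableEq V]
    (G : SimpleGraph V) (A : Matrix V V ℝ)
    (hsymm : A.IsSymm)
    (hzero : ∀ u v : V, ¬ G.Adj u v → A u v = 0)
    (η1 ηmin : ℝ)
    (hones : A.mulVec (fun _ => 1) = η1 • (fun _ => (1 : ℝ)))
    (hmax : ∀ (η : ℝ) (v : V → ℝ), v ≠ 0 → A.mulVec v = η • v → η ≤ η1)
    (hminEx : ∃ v : V → ℝ, v ≠ 0 ∧ A.mulVec v = ηmin • v)
    (hmin : ∀ (η : ℝ) (v : V → ℝ), v ≠ 0 → A.mulVec v = η • v → ηmin ≤ η)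
    (hlt : ηmin < η1)
    (S : Finset V) (hS : ∀ u ∈ S, ∀ v ∈ S, ¬ G.Adj u v) :
    (S.card : ℝ) ≤ (Fintype.card V : ℝ) * (-ηmin) / (η1 - ηmin) :=
  ratio_bound_general G A hsymm hzero η1 ηmin hones hmin hlt S hS
end

section
/- Let Γ = (V,E) be a finite graph and let A be a real symmetric matrix indexed by V with A_{uv} = 0 whenever u = v or {u,v} ∉ E. Suppose the all-ones vector 1 is an eigenvector of A with eigenvalue η1, that η1 is the largest eigenvalue of A, and let η_min be the smallest eigenvalue of A, with η_min < η1. If S is an independent set of Γ with |S| = |V| · (−η_min)/(η1 − η_min), then the vector 1_S − (|S|/|V|)·1 satisfies A(1_S − (|S|/|V|)·1) = η_min·(1_S − (|S|/|V|)·1); equivalently, the characteristic vector 1_S lies in the span of the all-ones vector together with the η_min-eigenspace of A. -/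
/-!
Since `η_min` is the least eigenvalue of the symmetric matrix `A`, the matrix `A - η_min • 1` is
positive semidefinite, so any vector whose Rayleigh quotient equals `η_min` lies in its kernel.
For `x = 1_S - (|S|/|V|) 1` one has `x ⊥ 1`, and since `A` vanishes on `S × S`, both
`xᵀ A x = -η1 |S|²/|V|` and `xᵀ x = |S| - |S|²/|V|` are explicit; the hypothesis on `|S|` is
exactly what makes their ratio `η_min`.
-/

open Matrix

namespace Matrix

variable {n : Type*} [Fintype n] {A : Matrix n n ℝ}

theorem IsSymm.dotProduct_mulVec_of_mulVec_eq_smul (hA : A.IsSymm) {η : ℝ} {u : n → ℝ}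
    (hu : A *ᵥ u = η • u) (w : n → ℝ) : u ⬝ᵥ A *ᵥ w = η * (u ⬝ᵥ w) := by
  rw [dotProduct_mulVec, ← mulVec_transpose, hA.eq, hu, smul_dotProduct, smul_eq_mul]

variable [DecidableEq n] {μ : ℝ}

theorem IsSymm.posSemidef_sub_smul_one (hA : A.IsSymm)
    (hμ : ∀ (η : ℝ) (v : n → ℝ), v ≠ 0 → A *ᵥ v = η • v → μ ≤ η) :
    (A - μ • 1).PosSemidef := by
  have hB : (A - μ • 1).IsHermitian :=
    (isHermitian_iff_isSymm.mpr hA).sub (isHermitian_one.smul (IsSelfAdjoint.all μ))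
  refine hB.posSemidef_iff_eigenvalues_nonneg.mpr fun i => ?_
  have hv : (⇑(hB.eigenvectorBasis i) : n → ℝ) ≠ 0 := fun h =>
    hB.eigenvectorBasis.orthonormal.ne_zero i (by ext j; exact congrFun h j)
  have hAv : A *ᵥ hB.eigenvectorBasis i = (hB.eigenvalues i + μ) • hB.eigenvectorBasis i := by
    have := hB.mulVec_eigenvectorBasis i
    rw [sub_mulVec, smul_mulVec, one_mulVec] at this
    rw [add_smul, ← this, sub_add_cancel]
  simpa using hμ _ _ hv hAv

theorem IsSymm.mulVec_eq_smul_of_dotProduct_mulVec_eq (hA : A.IsSymm)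
    (hμ : ∀ (η : ℝ) (v : n → ℝ), v ≠ 0 → A *ᵥ v = η • v → μ ≤ η) {x : n → ℝ}
    (hx : x ⬝ᵥ A *ᵥ x = μ * (x ⬝ᵥ x)) : A *ᵥ x = μ • x := by
  have hBx : (A - μ • 1) *ᵥ x = 0 := by
    refine ((hA.posSemidef_sub_smul_one hμ).dotProduct_mulVec_zero_iff x).mp ?_
    rw [sub_mulVec, smul_mulVec, one_mulVec, star_trivial, dotProduct_sub, hx,
      dotProduct_smul, smul_eq_mul, sub_self]
  rwa [sub_mulVec, smul_mulVec, one_mulVec, sub_eq_zero] at hBx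

end Matrix

theorem indicator_dotProduct_mulVec_indicator_eq_zero {n R : Type*} [Fintype n] [DecidableEq n]
    [NonAssocSemiring R] {A : Matrix n n R} {S : Finset n}
    (hA : ∀ u ∈ S, ∀ v ∈ S, A u v = 0) :
    (fun v => if v ∈ S then (1 : R) else 0) ⬝ᵥ A *ᵥ (fun v => if v ∈ S then (1 : R) else 0)
      = 0 := by
  simp only [dotProduct, mulVec, ite_mul, one_mul, zero_mul, mul_ite, mul_one, mul_zero,
    Finset.sum_ite_mem, Finset.univ_inter]
  exact Finset.sum_eq_zero fun u hu => Finset.sum_eq_zero fun v hv => hA u hu v hv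

theorem ratio_bound_equality_general {V : Type*} [Fintype V] [DecidableEq V]
    (G : SimpleGraph V) (A : Matrix V V ℝ)
    (hsymm : A.IsSymm)
    (hzero : ∀ u v : V, ¬ G.Adj u v → A u v = 0)
    (η1 ηmin : ℝ)
    (hones : A.mulVec (fun _ => 1) = η1 • (fun _ => (1 : ℝ)))
    (hmin : ∀ (η : ℝ) (v : V → ℝ), v ≠ 0 → A.mulVec v = η • v → ηmin ≤ η)
    (S : Finset V) (hS : ∀ u ∈ S, ∀ v ∈ S, ¬ G.Adj u v)
    (heq : (S.card : ℝ) = (Fintype.card V : ℝ) * (-ηmin) / (η1 - ηmin)) :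
    A.mulVec
        ((fun v => if v ∈ S then (1 : ℝ) else 0) -
          ((S.card : ℝ) / (Fintype.card V : ℝ)) • (fun _ => (1 : ℝ)))
      = ηmin • ((fun v => if v ∈ S then (1 : ℝ) else 0) -
          ((S.card : ℝ) / (Fintype.card V : ℝ)) • (fun _ => (1 : ℝ))) := by
  set χ : V → ℝ := fun v => if v ∈ S then 1 else 0
  set α : ℝ := (S.card : ℝ)
  set N : ℝ := (Fintype.card V : ℝ)
  have hχ1 : χ ⬝ᵥ (fun _ => 1) = α := by simp [χ, α, dotProduct]
  have hχχ : χ ⬝ᵥ χ = α := by simp [χ, α, dotProduct]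
  have h11 : (fun _ : V => (1 : ℝ)) ⬝ᵥ (fun _ => 1) = N := by simp [N, dotProduct]
  have hαN : α / N * N = α := div_mul_cancel_of_imp fun hN =>
    le_antisymm (hN ▸ Nat.cast_le.mpr S.card_le_univ) (Nat.cast_nonneg _)
  have hχAχ : χ ⬝ᵥ A *ᵥ χ = 0 :=
    indicator_dotProduct_mulVec_indicator_eq_zero fun u hu v hv => hzero u v (hS u hu v hv)
  have h1Aχ := hsymm.dotProduct_mulVec_of_mulVec_eq_smul hones χ
  -- when `η1 = ηmin`, `heq` reads `α = 0` since `x / 0 = 0`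
  have hα : α * (α * (η1 - ηmin) + ηmin * N) = 0 := by
    rcases eq_or_ne (η1 - ηmin) 0 with hd | hd
    · simp [α, heq, hd]
    · rw [heq]; field_simp; ring
  apply hsymm.mulVec_eq_smul_of_dotProduct_mulVec_eq hmin
  simp only [mulVec_sub, mulVec_smul, hones, dotProduct_sub, sub_dotProduct, smul_dotProduct,
    dotProduct_smul, smul_eq_mul, hχ1, hχχ, h11, hχAχ, h1Aχ, dotProduct_comm _ χ]
  rw [hαN]
  linear_combination (-1 / N) * hα + ηmin * hαN

theorem ratio_bound_equality {V : Type*} [Fintype V] [DecidableEq V]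
    (G : SimpleGraph V) (A : Matrix V V ℝ)
    (hsymm : A.IsSymm)
    (hzero : ∀ u v : V, ¬ G.Adj u v → A u v = 0)
    (η1 ηmin : ℝ)
    (hones : A.mulVec (fun _ => 1) = η1 • (fun _ => (1 : ℝ)))
    (hmax : ∀ (η : ℝ) (v : V → ℝ), v ≠ 0 → A.mulVec v = η • v → η ≤ η1)
    (hminEx : ∃ v : V → ℝ, v ≠ 0 ∧ A.mulVec v = ηmin • v)
    (hmin : ∀ (η : ℝ) (v : V → ℝ), v ≠ 0 → A.mulVec v = η • v → ηmin ≤ η)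
    (hlt : ηmin < η1)
    (S : Finset V) (hS : ∀ u ∈ S, ∀ v ∈ S, ¬ G.Adj u v)
    (heq : (S.card : ℝ) = (Fintype.card V : ℝ) * (-ηmin) / (η1 - ηmin)) :
    A.mulVec
        ((fun v => if v ∈ S then (1 : ℝ) else 0) -
          ((S.card : ℝ) / (Fintype.card V : ℝ)) • (fun _ => (1 : ℝ)))
      = ηmin • ((fun v => if v ∈ S then (1 : ℝ) else 0) -
          ((S.card : ℝ) / (Fintype.card V : ℝ)) • (fun _ => (1 : ℝ))) :=
  ratio_bound_equality_general G A hsymm hzero η1 ηmin hones hmin S hS heq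
end

section
/- For every n ≥ 1 and every fixed perfect matching m* of the complete graph K_{2n}, the number of perfect matchings m of K_{2n} with m ∩ m* = ∅ equals Σ_{i=0}^{n} (−1)^i · C(n,i) · (2(n−i)−1)!!, where C(n,i) is the binomial coefficient. -/
open Finset

/-- Matching on a general vertex set. -/
def MOn (V : Finset ℕ) (m : Finset (Finset ℕ)) : Prop :=
  (∀ e ∈ m, e.card = 2 ∧ e ⊆ V) ∧ ∀ v ∈ V, ∃! e, e ∈ m ∧ v ∈ e

open scoped Classical in
noncomputable def PMset (V : Finset ℕ) : Finset (Finset (Finset ℕ)) :=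
  V.powerset.powerset.filter fun m => MOn V m

lemma mem_PMset {V : Finset ℕ} {m : Finset (Finset ℕ)} : m ∈ PMset V ↔ MOn V m := by
  classical
  simp only [PMset, mem_filter, mem_powerset]
  exact ⟨fun h => h.2, fun h => ⟨fun e he => mem_powerset.2 (h.1 e he).2, h⟩⟩

lemma MOn.eq_of_mem {V : Finset ℕ} {m : Finset (Finset ℕ)} (h : MOn V m)
    {e f : Finset ℕ} {u : ℕ} (he : e ∈ m) (hf : f ∈ m) (hue : u ∈ e) (huf : u ∈ f) :
    e = f := by
  have hu : u ∈ V := (h.1 e he).2 hue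
  obtain ⟨g, _, hg⟩ := h.2 u hu
  rw [hg e ⟨he, hue⟩, hg f ⟨hf, huf⟩]

/-- removing a set of edges from a matching gives a matching on the remaining vertices -/
lemma MOn.sdiff {V : Finset ℕ} {m s : Finset (Finset ℕ)} (h : MOn V m) (hs : s ⊆ m) :
    MOn (V \ s.biUnion id) (m \ s) := by
  classical
  constructor
  · intro e he
    rw [mem_sdiff] at he
    refine ⟨(h.1 e he.1).1, fun u hu => mem_sdiff.2 ⟨(h.1 e he.1).2 hu, ?_⟩⟩
    intro hU
    simp only [mem_biUnion, id] at hU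
    obtain ⟨f, hfs, huf⟩ := hU
    exact he.2 (h.eq_of_mem he.1 (hs hfs) hu huf ▸ hfs)
  · intro v hv
    rw [mem_sdiff] at hv
    obtain ⟨e, ⟨hem, hve⟩, huniq⟩ := h.2 v hv.1
    have hes : e ∉ s := fun hes => hv.2 (mem_biUnion.2 ⟨e, hes, hve⟩)
    exact ⟨e, ⟨mem_sdiff.2 ⟨hem, hes⟩, hve⟩,
      fun f ⟨hf, hvf⟩ => huniq f ⟨(mem_sdiff.1 hf).1, hvf⟩⟩

/-- adding a set of disjoint edges covering the missing vertices gives a matching -/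
lemma MOn.union {V : Finset ℕ} {m s : Finset (Finset ℕ)}
    (hs2 : ∀ e ∈ s, e.card = 2 ∧ e ⊆ V)
    (hdisj : ∀ e ∈ s, ∀ f ∈ s, e ≠ f → Disjoint e f)
    (h : MOn (V \ s.biUnion id) m) :
    MOn V (m ∪ s) := by
  classical
  have hmV : ∀ e ∈ m, ∀ u ∈ e, u ∈ V \ s.biUnion id := fun e he => (h.1 e he).2
  constructor
  · intro e he
    rcases mem_union.1 he with he | he
    · exact ⟨(h.1 e he).1, fun u hu => (mem_sdiff.1 (hmV e he u hu)).1⟩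
    · exact hs2 e he
  · intro v hv
    by_cases hvU : v ∈ s.biUnion id
    · obtain ⟨e, hes, hve⟩ := mem_biUnion.1 hvU
      refine ⟨e, ⟨mem_union_right _ hes, hve⟩, ?_⟩
      rintro f ⟨hf, hvf⟩
      rcases mem_union.1 hf with hf | hf
      · exact absurd hvU (fun _ => (mem_sdiff.1 (hmV f hf v hvf)).2 hvU)
      · by_contra hne
        exact Finset.disjoint_left.1 (hdisj f hf e hes hne) hvf hve
    · obtain ⟨e, ⟨hem, hve⟩, huniq⟩ := h.2 v (mem_sdiff.2 ⟨hv, hvU⟩)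
      refine ⟨e, ⟨mem_union_left _ hem, hve⟩, ?_⟩
      rintro f ⟨hf, hvf⟩
      rcases mem_union.1 hf with hf | hf
      · exact huniq f ⟨hf, hvf⟩
      · exact absurd (mem_biUnion.2 ⟨f, hf, hvf⟩) hvU

/-- counting matchings containing a fixed partial matching `s` -/
lemma count_superset {V : Finset ℕ} (s : Finset (Finset ℕ))
    (hs2 : ∀ e ∈ s, e.card = 2 ∧ e ⊆ V)
    (hdisj : ∀ e ∈ s, ∀ f ∈ s, e ≠ f → Disjoint e f) :
    ((PMset V).filter (fun m => s ⊆ m)).card = (PMset (V \ s.biUnion id)).card := by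
  classical
  refine Finset.card_bij' (fun m _ => m \ s) (fun m _ => m ∪ s) ?_ ?_ ?_ ?_
  · intro m hm
    rw [mem_filter] at hm
    exact mem_PMset.2 ((mem_PMset.1 hm.1).sdiff hm.2)
  · intro m hm
    rw [mem_filter, mem_PMset]
    exact ⟨MOn.union hs2 hdisj (mem_PMset.1 hm), subset_union_right⟩
  · intro m hm
    rw [mem_filter] at hm
    exact sdiff_union_of_subset hm.2
  · intro m hm
    have h := mem_PMset.1 hm
    apply union_sdiff_cancel_right
    rw [Finset.disjoint_left]
    intro e hem hes
    obtain ⟨u, hu⟩ := Finset.card_pos.1 (by rw [(h.1 e hem).1]; norm_num)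
    exact (mem_sdiff.1 ((h.1 e hem).2 hu)).2 (mem_biUnion.2 ⟨e, hes, hu⟩)

lemma card_PMset {k : ℕ} : ∀ (V : Finset ℕ), V.card = 2 * k → (PMset V).card = oddFactorial k := by
  induction k with
  | zero =>
    intro V hV
    rw [Nat.mul_zero, Finset.card_eq_zero] at hV
    subst hV
    have : PMset ∅ = {∅} := by
      ext m
      rw [mem_PMset, mem_singleton]
      constructor
      · intro h
        ext e; simp only [Finset.notMem_empty, iff_false]
        intro he
        have h2 := (h.1 e he).1
        have h3 : e = ∅ := subset_empty.1 (h.1 e he).2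
        rw [h3] at h2
        simp at h2
      · rintro rfl
        exact ⟨fun e he => absurd he (notMem_empty e), fun v hv => absurd hv (notMem_empty v)⟩
    rw [this]; rfl
  | succ k ih =>
    intro V hV
    classical
    have hne : V.Nonempty := by rw [← Finset.card_pos, hV]; omega
    set v := V.min' hne with hvdef
    have hv : v ∈ V := V.min'_mem hne
    -- partner decomposition
    have hpart : PMset V = (V.erase v).biUnion
        (fun w => (PMset V).filter fun m => ({v, w} : Finset ℕ) ∈ m) := by
      ext m
      simp only [mem_biUnion, mem_filter]
      constructor
      · intro hm
        have h := mem_PMset.1 hm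
        obtain ⟨e, ⟨hem, hve⟩, _⟩ := h.2 v hv
        obtain ⟨a, b, hab, habe⟩ := Finset.card_eq_two.1 (h.1 e hem).1
        have hbV : ∀ u ∈ e, u ∈ V := fun u hu => (h.1 e hem).2 hu
        have haV : a ∈ V := hbV a (by rw [habe]; simp)
        have hbbV : b ∈ V := hbV b (by rw [habe]; simp)
        have hvab : v = a ∨ v = b := by rw [habe] at hve; simpa using hve
        rcases hvab with rfl | rfl
        · exact ⟨b, mem_erase.2 ⟨Ne.symm hab, hbbV⟩, hm, by rwa [← habe]⟩
        · refine ⟨a, mem_erase.2 ⟨hab, haV⟩, hm, ?_⟩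
          rw [show ({v, a} : Finset ℕ) = {a, v} by ext x; simp; tauto, ← habe]; exact hem
      · rintro ⟨w, _, hm, _⟩; exact hm
    have hdisjfib : ∀ w₁ ∈ V.erase v, ∀ w₂ ∈ V.erase v, w₁ ≠ w₂ →
        Disjoint ((PMset V).filter fun m => ({v, w₁} : Finset ℕ) ∈ m)
          ((PMset V).filter fun m => ({v, w₂} : Finset ℕ) ∈ m) := by
      intro w₁ h₁ w₂ h₂ hne12
      rw [Finset.disjoint_left]
      intro m hm₁ hm₂
      rw [mem_filter] at hm₁ hm₂
      have h := mem_PMset.1 hm₁.1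
      have := h.eq_of_mem (u := v) hm₁.2 hm₂.2 (by simp) (by simp)
      apply hne12
      have hw : w₁ ∈ ({v, w₂} : Finset ℕ) := by rw [← this]; simp
      rcases mem_insert.1 hw with h' | h'
      · exact absurd h' (mem_erase.1 h₁).1
      · simpa using h'
    rw [hpart, Finset.card_biUnion hdisjfib]
    have hfib : ∀ w ∈ V.erase v,
        ((PMset V).filter fun m => ({v, w} : Finset ℕ) ∈ m).card = oddFactorial k := by
      intro w hw
      have hwv : w ≠ v := (mem_erase.1 hw).1
      have hwV : w ∈ V := (mem_erase.1 hw).2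
      have hsing : ∀ m : Finset (Finset ℕ), (({v, w} : Finset ℕ) ∈ m) ↔
          ({({v,w} : Finset ℕ)} : Finset (Finset ℕ)) ⊆ m := by
        intro m; simp
      have h2 : ∀ e ∈ ({({v,w} : Finset ℕ)} : Finset (Finset ℕ)), e.card = 2 ∧ e ⊆ V := by
        intro e he
        rw [mem_singleton] at he; subst he
        exact ⟨Finset.card_pair (Ne.symm hwv), by intro u hu; rcases mem_insert.1 hu with rfl | h'
                                                  · exact hv
                                                  · simp at h'; subst h'; exact hwV⟩
      have hd : ∀ e ∈ ({({v,w} : Finset ℕ)} : Finset (Finset ℕ)),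
          ∀ f ∈ ({({v,w} : Finset ℕ)} : Finset (Finset ℕ)), e ≠ f → Disjoint e f := by
        intro e he f hf hef
        rw [mem_singleton] at he hf
        exact absurd (he.trans hf.symm) hef
      have := count_superset ({({v,w} : Finset ℕ)} : Finset (Finset ℕ)) h2 hd
      simp only [Finset.singleton_biUnion, id] at this
      rw [Finset.filter_congr (fun m _ => by rw [hsing m]), this]
      apply ih
      rw [Finset.card_sdiff_of_subset (by intro u hu; exact (h2 _ (mem_singleton_self _)).2 hu)]
      rw [hV, Finset.card_pair (Ne.symm hwv)]
      omega
    rw [Finset.sum_congr rfl hfib, Finset.sum_const, Finset.card_erase_of_mem hv, hV,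
      smul_eq_mul]
    show (2 * (k + 1) - 1) * oddFactorial k = oddFactorial (k + 1)
    have h21 : 2 * (k + 1) - 1 = 2 * k + 1 := by omega
    rw [h21]
    rfl

theorem derangement_count (n : ℕ) (hn : 1 ≤ n)
    (mstar : Finset (Finset ℕ)) (hmstar : IsPM n mstar) :
    (({m | IsPM n m ∧ m ∩ mstar = ∅} : Set (Finset (Finset ℕ))).ncard : ℤ) =
      ∑ i ∈ Finset.range (n + 1),
        (-1 : ℤ) ^ i * (n.choose i : ℤ) * (oddFactorial (n - i) : ℤ) := by
  classical
  have hM : MOn (Finset.range (2 * n)) mstar := hmstar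
  -- basic facts about mstar
  have hdisj : ∀ e ∈ mstar, ∀ f ∈ mstar, e ≠ f → Disjoint e f := by
    intro e he f hf hef
    rw [Finset.disjoint_left]
    intro u hue huf
    exact hef (hM.eq_of_mem he hf hue huf)
  have hU : mstar.biUnion id = Finset.range (2 * n) := by
    apply Finset.Subset.antisymm
    · intro u hu
      obtain ⟨e, he, hue⟩ := mem_biUnion.1 hu
      exact (hM.1 e he).2 hue
    · intro u hu
      obtain ⟨e, ⟨he, hue⟩, _⟩ := hM.2 u hu
      exact mem_biUnion.2 ⟨e, he, hue⟩
  have hcard_mstar : mstar.card = n := by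
    have := Finset.card_biUnion (s := mstar) (t := id) (fun e he f hf h => hdisj e he f hf h)
    rw [hU, Finset.card_range] at this
    have h2 : ∀ e ∈ mstar, (id e).card = 2 := fun e he => (hM.1 e he).1
    rw [Finset.sum_congr rfl h2, Finset.sum_const, smul_eq_mul] at this
    omega
  -- the set as a finset
  have hset : ({m | IsPM n m ∧ m ∩ mstar = ∅} : Set (Finset (Finset ℕ))) =
      ↑((PMset (Finset.range (2 * n))).filter fun m => m ∩ mstar = ∅) := by
    ext m
    simp only [Set.mem_setOf_eq, Finset.coe_filter, Set.mem_setOf_eq, mem_PMset]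
    exact Iff.rfl
  rw [hset, Set.ncard_coe_finset]
  -- inclusion-exclusion
  have key : (((PMset (Finset.range (2 * n))).filter fun m => m ∩ mstar = ∅).card : ℤ) =
      ∑ s ∈ mstar.powerset, (-1 : ℤ) ^ s.card *
        ((PMset (Finset.range (2 * n))).filter fun m => s ⊆ m).card := by
    rw [Finset.card_filter]
    push_cast
    have hL : ∀ m ∈ PMset (Finset.range (2 * n)),
        (if m ∩ mstar = ∅ then (1 : ℤ) else 0) =
        ∑ s ∈ mstar.powerset, if s ⊆ m then (-1 : ℤ) ^ s.card else 0 := by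
      intro m _
      have hps : mstar.powerset.filter (fun s => s ⊆ m) = (m ∩ mstar).powerset := by
        ext s
        simp only [Finset.mem_filter, Finset.mem_powerset, Finset.subset_inter_iff]
        tauto
      rw [← Finset.sum_filter, hps, Finset.sum_powerset_neg_one_pow_card]
    rw [Finset.sum_congr rfl hL, Finset.sum_comm]
    refine Finset.sum_congr rfl fun s hs => ?_
    rw [Finset.card_filter]
    push_cast
    rw [Finset.mul_sum]
    refine Finset.sum_congr rfl fun m hm => ?_
    by_cases h : s ⊆ m <;> simp [h]
  rw [key]
  have hcs : ∀ s ∈ mstar.powerset,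
      ((PMset (Finset.range (2 * n))).filter fun m => s ⊆ m).card =
        oddFactorial (n - s.card) := by
    intro s hs
    rw [Finset.mem_powerset] at hs
    have hs2 : ∀ e ∈ s, e.card = 2 ∧ e ⊆ Finset.range (2 * n) :=
      fun e he => hM.1 e (hs he)
    have hd : ∀ e ∈ s, ∀ f ∈ s, e ≠ f → Disjoint e f :=
      fun e he f hf h => hdisj e (hs he) f (hs hf) h
    rw [count_superset s hs2 hd]
    apply card_PMset
    have hUs : s.biUnion id ⊆ Finset.range (2 * n) := by
      intro u hu
      obtain ⟨e, he, hue⟩ := mem_biUnion.1 hu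
      exact (hs2 e he).2 hue
    have hcU : (s.biUnion id).card = 2 * s.card := by
      rw [Finset.card_biUnion (s := s) (t := id) (fun e he f hf h => hd e he f hf h)]
      have h2 : ∑ u ∈ s, (id u).card = ∑ _u ∈ s, 2 :=
        Finset.sum_congr rfl (fun e he => (hs2 e he).1)
      rw [h2, Finset.sum_const, smul_eq_mul]
      ring
    have hsn : s.card ≤ n := hcard_mstar ▸ Finset.card_le_card hs
    rw [Finset.card_sdiff_of_subset hUs, Finset.card_range, hcU]
    omega
  rw [Finset.sum_congr rfl (fun s hs => by rw [hcs s hs])]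
  rw [Finset.sum_powerset_apply_card (fun i => (-1 : ℤ) ^ i * (oddFactorial (n - i) : ℤ)),
    hcard_mstar]
  refine Finset.sum_congr rfl fun i hi => ?_
  rw [nsmul_eq_mul]
  ring
end

section
/- Let n and k be natural numbers with k < n/2, and let λ be a partition of n whose largest part equals n − k. Then 2^n·n!/(2(n−k)·(2k)^k) ≤ 2^n·n!/(2^{ℓ(λ)}·z_λ) ≤ 2^{n+1}·(n−1)!, where the middle quantity equals the size of the sphere Ω_λ in the perfect matching association scheme on K_{2n}. (When k = 0 interpret (2k)^k = 1.) -/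
/-- `z_λ = ∏_i i^{m_i} m_i!`, where `m_i` is the number of parts of `λ` equal to `i`. -/
def zPart {n : ℕ} (l : Nat.Partition n) : ℕ :=
  l.parts.toFinset.prod (fun i => i ^ (l.parts.count i) * (l.parts.count i).factorial)

/-!
Write `ℓ = ℓ(λ)`. The upper bound only needs `n ≤ 2^ℓ z_λ`, which holds for every partition because
`z_λ` is at least the product of the parts and `∏ 2λᵢ ≥ ∑ λᵢ`. For the lower bound, the part `n - k`
exceeds `n / 2`, so it occurs exactly once and the remaining parts `μ` form a partition of `k`; then
`2^ℓ z_λ = 2 (n - k) · 2^{ℓ(μ)} z_μ`, and every factor `2^c i^c c!` of `2^{ℓ(μ)} z_μ` (with `c` the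
multiplicity of `i`) is at most `(2 i c)^c ≤ (2k)^c`, while `ℓ(μ) ≤ k`.
-/

open Nat

namespace Multiset

def zNum (s : Multiset ℕ) : ℕ :=
  ∏ i ∈ s.toFinset, i ^ s.count i * (s.count i)!

theorem zNum_cons_of_notMem {a : ℕ} {s : Multiset ℕ} (ha : a ∉ s) :
    zNum (a ::ₘ s) = a * zNum s := by
  have ha' : a ∉ s.toFinset := by simpa using ha
  rw [zNum, toFinset_cons, Finset.prod_insert ha', count_cons_self, count_eq_zero.2 ha]
  simp only [zero_add, pow_one, factorial_one, mul_one]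
  refine congrArg (a * ·) (Finset.prod_congr rfl fun i hi => ?_)
  rw [count_cons_of_ne (ne_of_mem_of_not_mem hi ha')]

theorem prod_le_zNum (s : Multiset ℕ) : s.prod ≤ zNum s := by
  rw [Finset.prod_multiset_count, zNum]
  exact Finset.prod_le_prod' fun i _ => Nat.le_mul_of_pos_right _ (factorial_pos _)

theorem count_mul_le_sum (s : Multiset ℕ) (i : ℕ) : s.count i * i ≤ s.sum := by
  by_cases hi : i ∈ s.toFinset
  · rw [Finset.sum_multiset_count]
    exact Finset.single_le_sum (f := fun j => s.count j • j) (fun _ _ => Nat.zero_le _) hi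
  · simp [count_eq_zero.2 (by simpa using hi)]

theorem zNum_le_sum_pow_card (s : Multiset ℕ) : zNum s ≤ s.sum ^ card s := by
  rw [zNum, ← toFinset_sum_count_eq, ← Finset.prod_pow_eq_pow_sum]
  refine Finset.prod_le_prod' fun i _ => ?_
  calc i ^ s.count i * (s.count i)!
      ≤ i ^ s.count i * s.count i ^ s.count i := Nat.mul_le_mul_left _ (factorial_le_pow _)
    _ = (s.count i * i) ^ s.count i := by rw [mul_comm, mul_pow]
    _ ≤ s.sum ^ s.count i := Nat.pow_le_pow_left (count_mul_le_sum s i) _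

theorem two_pow_card_mul_zNum_le {s : Multiset ℕ} (hs : ∀ a ∈ s, 0 < a) :
    2 ^ card s * zNum s ≤ (2 * s.sum) ^ s.sum := by
  have hcard : card s ≤ s.sum := by simpa using card_nsmul_le_sum hs
  calc 2 ^ card s * zNum s ≤ 2 ^ card s * s.sum ^ card s :=
        Nat.mul_le_mul_left _ (zNum_le_sum_pow_card s)
    _ = (2 * s.sum) ^ card s := (mul_pow _ _ _).symm
    _ ≤ (2 * s.sum) ^ s.sum := by
      rcases Nat.eq_zero_or_pos s.sum with h | h
      · simp [h, show card s = 0 by omega]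
      · exact Nat.pow_le_pow_right (by omega) hcard

theorem sum_le_two_pow_card_mul_prod {s : Multiset ℕ} (hs : ∀ a ∈ s, 0 < a) :
    s.sum ≤ 2 ^ card s * s.prod := by
  induction s using Multiset.induction_on with
  | empty => simp
  | cons a s ih =>
    have ha : 0 < a := hs a (mem_cons_self a s)
    have hs' : ∀ b ∈ s, 0 < b := fun b hb => hs b (mem_cons_of_mem hb)
    have hprod : 0 < s.prod := prod_pos hs'
    have ih := ih hs'
    rw [sum_cons, prod_cons, card_cons, pow_succ]
    have : 0 < 2 ^ card s * s.prod := by positivity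
    nlinarith

theorem notMem_erase_of_sum_lt {a : ℕ} {s : Multiset ℕ} (ha : a ∈ s) (hsum : s.sum < 2 * a) :
    a ∉ s.erase a := fun h => by
  have := le_sum_of_mem h
  rw [← cons_erase ha, sum_cons] at hsum
  omega

end Multiset

open Multiset

theorem zPart_eq_zNum {n : ℕ} (l : Nat.Partition n) : zPart l = zNum l.parts := rfl

theorem le_two_pow_card_mul_zPart {n : ℕ} (l : Nat.Partition n) :
    n ≤ 2 ^ card l.parts * zPart l := by
  calc n = l.parts.sum := l.parts_sum.symm
    _ ≤ 2 ^ card l.parts * l.parts.prod := sum_le_two_pow_card_mul_prod fun _ => l.parts_pos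
    _ ≤ 2 ^ card l.parts * zPart l := Nat.mul_le_mul_left _ (prod_le_zNum _)

theorem two_pow_card_mul_zPart_le {n k : ℕ} (hk : 2 * k < n) (l : Nat.Partition n)
    (hmem : n - k ∈ l.parts) :
    2 ^ card l.parts * zPart l ≤ 2 * (n - k) * (2 * k) ^ k := by
  set μ := l.parts.erase (n - k)
  have hcons : (n - k) ::ₘ μ = l.parts := cons_erase hmem
  have hsum : μ.sum = k := by
    have := congrArg Multiset.sum hcons
    rw [sum_cons, l.parts_sum] at this
    omega
  have hnot : n - k ∉ μ := notMem_erase_of_sum_lt hmem (by rw [l.parts_sum]; omega)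
  have hpos : ∀ a ∈ μ, 0 < a := fun a ha => l.parts_pos (mem_of_mem_erase ha)
  rw [zPart_eq_zNum, ← hcons, card_cons, zNum_cons_of_notMem hnot, pow_succ]
  calc 2 ^ card μ * 2 * ((n - k) * zNum μ) = 2 * (n - k) * (2 ^ card μ * zNum μ) := by ring
    _ ≤ 2 * (n - k) * (2 * k) ^ k := by
      rw [← hsum]
      exact Nat.mul_le_mul_left _ (two_pow_card_mul_zNum_le hpos)

theorem sphere_size_bounds (n k : ℕ) (hk : 2 * k < n) (l : Nat.Partition n)
    (hmax : (n - k) ∈ l.parts ∧ ∀ p ∈ l.parts, p ≤ n - k) :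
    ((2 : ℝ) ^ n * (n.factorial : ℝ)) / (2 * ((n : ℝ) - k) * (2 * (k : ℝ)) ^ k)
        ≤ ((2 : ℝ) ^ n * (n.factorial : ℝ)) /
            ((2 : ℝ) ^ (Multiset.card l.parts) * (zPart l : ℝ)) ∧
      ((2 : ℝ) ^ n * (n.factorial : ℝ)) /
            ((2 : ℝ) ^ (Multiset.card l.parts) * (zPart l : ℝ))
        ≤ (2 : ℝ) ^ (n + 1) * ((n - 1).factorial : ℝ) := by
  have hn : 0 < n := by omega
  have hlower : (n : ℝ) ≤ 2 ^ card l.parts * zPart l := by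
    exact_mod_cast le_two_pow_card_mul_zPart l
  have hupper : (2 : ℝ) ^ card l.parts * zPart l ≤ 2 * ((n : ℝ) - k) * (2 * (k : ℝ)) ^ k := by
    rw [← Nat.cast_sub (by omega)]
    exact_mod_cast two_pow_card_mul_zPart_le hk l hmax.1
  have hnum : (0 : ℝ) ≤ 2 ^ n * n ! := by positivity
  have hnR : (0 : ℝ) < n := by exact_mod_cast hn
  refine ⟨div_le_div_of_nonneg_left hnum (hnR.trans_le hlower) hupper, ?_⟩
  calc (2 : ℝ) ^ n * n ! / (2 ^ card l.parts * zPart l) ≤ 2 ^ n * n ! / n :=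
        div_le_div_of_nonneg_left hnum hnR hlower
    _ = 2 ^ n * (n - 1)! := by
      rw [← Nat.mul_factorial_pred hn.ne', Nat.cast_mul]
      field_simp
    _ ≤ 2 ^ (n + 1) * (n - 1)! := by gcongr <;> norm_num
end
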